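/- Let a⁽¹⁾ ∈ ℝ^{d₁} and a⁽²⁾ ∈ ℝ^{d₂} be independent standard Gaussian vectors and let M be a fixed d₁×d₂ real matrix. Then E|⟨a⁽¹⁾, M a⁽²⁾⟩| ≥ (2/π)‖M‖_F and E|⟨a⁽¹⁾, M a⁽²⁾⟩| ≤ √(2/π)‖M‖_F. -/

import Mathlib

/-!
Write `γ` for the standard Gaussian measure on `ℝⁿ` and `Mᵢ` for the rows of `M`. For a fixed
vector `v`, the linear form `⟨v, ·⟩` has law `N(0, ‖v‖²)` under `γ`, so `E|⟨v, a⟩| = √(2/π) ‖v‖`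
and `E⟨v, a⟩² = ‖v‖²`. Conditioning on `a⁽²⁾` (Fubini), `E|⟨a⁽¹⁾, M a⁽²⁾⟩| = √(2/π) E‖M a⁽²⁾‖`.
On the one hand `(E‖M a⁽²⁾‖)² ≤ E‖M a⁽²⁾‖² = ‖M‖_F²`. On the other hand, by the triangle
inequality for `ℓ²`-valued integrals, `E‖M a⁽²⁾‖` dominates the `ℓ²`-norm of the vector
`(E|⟨Mᵢ, a⁽²⁾⟩|)ᵢ = (√(2/π) ‖Mᵢ‖)ᵢ`, which is `√(2/π) ‖M‖_F`.
-/

open MeasureTheory ProbabilityTheory Real Set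
open scoped NNReal Matrix

lemma integral_mul_exp_neg_mul_sq {b : ℝ} (hb : 0 < b) :
    ∫ x in Ioi 0, x * rexp (-b * x ^ 2) = (2 * b)⁻¹ := by
  have h := integral_mul_cexp_neg_mul_sq (b := (b : ℂ)) (by simpa using hb)
  have hcast (x : ℝ) :
      (x : ℂ) * Complex.exp (-(b : ℂ) * (x : ℂ) ^ 2) = ((x * rexp (-b * x ^ 2) : ℝ) : ℂ) := by
    push_cast
    ring_nf
  simp_rw [hcast, integral_complex_ofReal] at h
  exact_mod_cast h

lemma integral_abs_gaussianReal (v : ℝ≥0) :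
    ∫ x, |x| ∂gaussianReal 0 v = √(2 / π) * √v := by
  rcases eq_or_ne v 0 with rfl | hv
  · simp [gaussianReal_zero_var]
  have hv' : (0 : ℝ) < v := by positivity
  have hnorm : √(2 * π * v) = √(2 / π) * √v * π := by
    rw [show 2 * π * v = 2 / π * v * π ^ 2 by field_simp, sqrt_mul (by positivity),
      sqrt_mul (by positivity), sqrt_sq pi_pos.le]
  calc ∫ x, |x| ∂gaussianReal 0 v
      = ∫ x, |x| * ((√(2 * π * v))⁻¹ * rexp (-(2 * (v : ℝ))⁻¹ * |x| ^ 2)) := by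
        rw [integral_gaussianReal_eq_integral_smul hv]
        congr 1 with x
        simp only [gaussianPDFReal_def, smul_eq_mul, sub_zero, sq_abs]
        ring_nf
    _ = 2 * ((√(2 * π * v))⁻¹ * ∫ x in Ioi 0, x * rexp (-(2 * (v : ℝ))⁻¹ * x ^ 2)) := by
        rw [integral_comp_abs
          (f := fun x => x * ((√(2 * π * v))⁻¹ * rexp (-(2 * (v : ℝ))⁻¹ * x ^ 2)))]
        simp only [mul_left_comm _ (√(2 * π * v))⁻¹, integral_const_mul]
    _ = √(2 / π) * √v := by
        rw [integral_mul_exp_neg_mul_sq (by positivity), hnorm]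
        have : 0 < √(2 / π) := by positivity
        have : 0 < √v := by positivity
        field_simp
        rw [sq_sqrt (by positivity), sq_sqrt hv'.le]
        field_simp

lemma sq_integral_le_integral_sq {α : Type*} [MeasurableSpace α] {μ : Measure α}
    [IsProbabilityMeasure μ] {f : α → ℝ} (hf : MemLp f 2 μ) :
    (∫ a, f a ∂μ) ^ 2 ≤ ∫ a, f a ^ 2 ∂μ := by
  have h := variance_nonneg f μ
  rw [variance_eq_sub hf] at h
  simpa using h

section EuclideanNorm

variable {α ι : Type*} [MeasurableSpace α] {μ : Measure α} [Fintype ι] {f : ι → α → ℝ}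

lemma norm_toLp_eq_sqrt_sum_sq (x : ι → ℝ) :
    ‖(WithLp.toLp 2 x : EuclideanSpace ℝ ι)‖ = √(∑ i, x i ^ 2) := by
  simp [EuclideanSpace.norm_eq]

lemma memLp_sqrt_sum_sq {p : ENNReal} (hf : ∀ i, MemLp (f i) p μ) :
    MemLp (fun a => √(∑ i, f i a ^ 2)) p μ := by
  have h : MemLp (fun a => (WithLp.toLp 2 (f · a) : EuclideanSpace ℝ ι)) p μ :=
    MemLp.of_eval_piLp hf
  simpa only [norm_toLp_eq_sqrt_sum_sq] using h.norm

lemma sqrt_sum_sq_integral_le_integral_sqrt_sum_sq (hf : ∀ i, Integrable (f i) μ) :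
    √(∑ i, (∫ a, f i a ∂μ) ^ 2) ≤ ∫ a, √(∑ i, f i a ^ 2) ∂μ := by
  have h := norm_integral_le_integral_norm (μ := μ)
    (fun a => (WithLp.toLp 2 (f · a) : EuclideanSpace ℝ ι))
  have hint : ∫ a, (WithLp.toLp 2 (f · a) : EuclideanSpace ℝ ι) ∂μ =
      WithLp.toLp 2 (fun i => ∫ a, f i a ∂μ) := by
    ext i
    exact eval_integral_piLp hf i
  simpa only [hint, norm_toLp_eq_sqrt_sum_sq] using h

end EuclideanNorm

section StandardGaussianVector

variable {ι : Type*} [Fintype ι]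

local notation "γ[" ι "]" => Measure.pi fun _ : ι => gaussianReal 0 1

lemma hasLaw_dotProduct_pi_gaussianReal (v : ι → ℝ) :
    HasLaw (fun y => v ⬝ᵥ y) (gaussianReal 0 (∑ j, v j ^ 2).toNNReal) γ[ι] where
  aemeasurable := (Continuous.measurable (by fun_prop)).aemeasurable
  map_eq := by
    set L := innerSL ℝ (WithLp.toLp 2 v : EuclideanSpace ℝ ι)
    have hL : (fun y => v ⬝ᵥ y) = L ∘ WithLp.toLp 2 := by
      ext y
      simp [L, EuclideanSpace.inner_eq_star_dotProduct, dotProduct_comm]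
    rw [hL, ← Measure.map_map (by fun_prop) (by fun_prop), map_pi_eq_stdGaussian,
      IsGaussian.map_eq_gaussianReal, integral_strongDual_stdGaussian, variance_dual_stdGaussian,
      innerSL_apply_norm, EuclideanSpace.real_norm_sq_eq]

lemma memLp_dotProduct_pi_gaussianReal (v : ι → ℝ) : MemLp (fun y => v ⬝ᵥ y) 2 γ[ι] :=
  (hasLaw_dotProduct_pi_gaussianReal v).hasGaussianLaw.memLp_two

lemma integral_abs_dotProduct_pi_gaussianReal (v : ι → ℝ) :
    ∫ y, |v ⬝ᵥ y| ∂γ[ι] = √(2 / π) * √(∑ j, v j ^ 2) := by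
  rw [← Function.comp_def abs, (hasLaw_dotProduct_pi_gaussianReal v).integral_comp
    continuous_abs.aestronglyMeasurable, integral_abs_gaussianReal,
    Real.coe_toNNReal _ (by positivity)]

lemma integral_sq_dotProduct_pi_gaussianReal (v : ι → ℝ) :
    ∫ y, (v ⬝ᵥ y) ^ 2 ∂γ[ι] = ∑ j, v j ^ 2 := by
  rw [← Function.comp_def (· ^ 2), (hasLaw_dotProduct_pi_gaussianReal v).integral_comp
    (by fun_prop), ← variance_of_integral_eq_zero (X := fun x => x) aemeasurable_id'
    integral_id_gaussianReal, variance_fun_id_gaussianReal, Real.coe_toNNReal _ (by positivity)]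

variable {m n : Type*} [Fintype m] [Fintype n] (M : Matrix m n ℝ)

lemma integral_abs_dotProduct_mulVec_prod_pi_gaussianReal :
    ∫ p, |p.1 ⬝ᵥ M *ᵥ p.2| ∂(γ[m].prod γ[n]) =
      √(2 / π) * ∫ y, √(∑ i, (M i ⬝ᵥ y) ^ 2) ∂γ[n] := by
  have hinner (y : n → ℝ) :
      ∫ x, |x ⬝ᵥ M *ᵥ y| ∂γ[m] = √(2 / π) * √(∑ i, (M i ⬝ᵥ y) ^ 2) := by
    simp_rw [dotProduct_comm _ (M *ᵥ y)]
    exact integral_abs_dotProduct_pi_gaussianReal _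
  have hint : Integrable (fun p : (m → ℝ) × (n → ℝ) => |p.1 ⬝ᵥ M *ᵥ p.2|) (γ[m].prod γ[n]) := by
    refine (integrable_prod_iff' (Continuous.aestronglyMeasurable (by fun_prop))).2 ⟨?_, ?_⟩
    · refine ae_of_all _ fun y => ?_
      simp_rw [dotProduct_comm _ (M *ᵥ y)]
      exact ((memLp_dotProduct_pi_gaussianReal _).integrable one_le_two).abs
    · simp_rw [Real.norm_eq_abs, abs_abs, hinner]
      exact ((memLp_sqrt_sum_sq fun i => memLp_dotProduct_pi_gaussianReal (M i)).integrable
        one_le_two).const_mul _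
  rw [integral_prod_symm _ hint]
  simp_rw [hinner]
  exact integral_const_mul _ _

lemma integral_sqrt_sum_sq_dotProduct_pi_gaussianReal_le :
    ∫ y, √(∑ i, (M i ⬝ᵥ y) ^ 2) ∂γ[n] ≤ √(∑ i, ∑ j, M i j ^ 2) := by
  refine (le_abs_self _).trans (Real.abs_le_sqrt ?_)
  calc (∫ y, √(∑ i, (M i ⬝ᵥ y) ^ 2) ∂γ[n]) ^ 2
      ≤ ∫ y, √(∑ i, (M i ⬝ᵥ y) ^ 2) ^ 2 ∂γ[n] :=
        sq_integral_le_integral_sq (memLp_sqrt_sum_sq fun i => memLp_dotProduct_pi_gaussianReal _)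
    _ = ∑ i, ∫ y, (M i ⬝ᵥ y) ^ 2 ∂γ[n] := by
        simp_rw [Real.sq_sqrt (Finset.sum_nonneg fun i _ => sq_nonneg _)]
        exact integral_finsetSum _ fun i _ => (memLp_dotProduct_pi_gaussianReal _).integrable_sq
    _ = ∑ i, ∑ j, M i j ^ 2 := by simp_rw [integral_sq_dotProduct_pi_gaussianReal]

lemma le_integral_sqrt_sum_sq_dotProduct_pi_gaussianReal :
    √(2 / π) * √(∑ i, ∑ j, M i j ^ 2) ≤ ∫ y, √(∑ i, (M i ⬝ᵥ y) ^ 2) ∂γ[n] := by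
  have h := sqrt_sum_sq_integral_le_integral_sqrt_sum_sq (μ := γ[n]) (f := fun i y => |M i ⬝ᵥ y|)
    fun i => ((memLp_dotProduct_pi_gaussianReal _).integrable one_le_two).abs
  simp_rw [integral_abs_dotProduct_pi_gaussianReal, sq_abs, mul_pow,
    Real.sq_sqrt (show 0 ≤ 2 / π by positivity),
    Real.sq_sqrt (Finset.sum_nonneg fun j _ => sq_nonneg _), ← Finset.mul_sum] at h
  rwa [Real.sqrt_mul (by positivity)] at h

end StandardGaussianVector

theorem stmt_14 (d₁ d₂ : ℕ) (M : Matrix (Fin d₁) (Fin d₂) ℝ) :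
    (2 / Real.pi) * Real.sqrt (∑ i, ∑ j, (M i j) ^ 2) ≤
      (∫ p : (Fin d₁ → ℝ) × (Fin d₂ → ℝ),
        |∑ i, p.1 i * M.mulVec p.2 i|
        ∂((Measure.pi fun _ : Fin d₁ => gaussianReal 0 1).prod
            (Measure.pi fun _ : Fin d₂ => gaussianReal 0 1))) ∧
    (∫ p : (Fin d₁ → ℝ) × (Fin d₂ → ℝ),
        |∑ i, p.1 i * M.mulVec p.2 i|
        ∂((Measure.pi fun _ : Fin d₁ => gaussianReal 0 1).prod
            (Measure.pi fun _ : Fin d₂ => gaussianReal 0 1))) ≤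
      Real.sqrt (2 / Real.pi) * Real.sqrt (∑ i, ∑ j, (M i j) ^ 2) := by
  have hE := integral_abs_dotProduct_mulVec_prod_pi_gaussianReal M
  unfold dotProduct at hE
  rw [hE]
  constructor
  · calc 2 / π * √(∑ i, ∑ j, M i j ^ 2)
        = √(2 / π) * (√(2 / π) * √(∑ i, ∑ j, M i j ^ 2)) := by
          rw [← mul_assoc, Real.mul_self_sqrt (by positivity)]
      _ ≤ _ := by
          gcongr
          exact le_integral_sqrt_sum_sq_dotProduct_pi_gaussianReal M
  · gcongr
    exact integral_sqrt_sum_sq_dotProduct_pi_gaussianReal_le M
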